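/- Let Γ be a subgroup of SL(2,ℝ) that is discrete, i.e. the subspace topology induced on Γ from SL(2,ℝ) is the discrete topology. If A and B are elements of Γ that are hyperbolic (|tr A| > 2 and |tr B| > 2) and there exists a nonzero vector v ∈ ℝ² that is an eigenvector of both A and B, then A and B commute: A·B = B·A. (Equivalently, two hyperbolic elements of a discrete subgroup of SL(2,ℝ) that share one fixed point on the circle at infinity must share both fixed points; this is the corrected form of the step in the proof of Theorem 1 where two boundary maps of hyperbolic isometries having exactly one fixed point in common is shown to contradict discreteness.) -/

import Mathlib

/-!
The commutator `C = ⁅A, B⁆` fixes the common eigenvector `v`, so it is unipotent: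
`C = 1 + c • v ⊗ v⊥`. Conjugation by `A` multiplies `c` by `a²`, where `a` is the eigenvalue
of `A` on `v`, and hyperbolicity of `A` means `|a| ≠ 1`. Conjugating `C` by the powers of `A`
(or of `A⁻¹`) therefore gives elements of `Γ` converging to `1`, which by discreteness are
eventually equal to `1`; hence `C = 1`.
-/

instance : TopologicalSpace (Matrix.SpecialLinearGroup (Fin 2) ℝ) :=
  TopologicalSpace.induced
    (fun A => (A : Matrix (Fin 2) (Fin 2) ℝ)) inferInstance

namespace Matrix

variable {R : Type*} [CommRing R]

def perp (v : Fin 2 → R) : Fin 2 → R := ![v 1, -v 0]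

theorem perp_smul (a : R) (v : Fin 2 → R) : perp (a • v) = a • perp v := by
  ext i; fin_cases i <;> simp [perp]

/-- The symplectic identity `Aᵀ J A = (det A) • J` for the quarter turn `J = !![0, 1; -1, 0]`. -/
theorem perp_vecMul (v : Fin 2 → R) (A : Matrix (Fin 2) (Fin 2) R) :
    perp v ᵥ* A = perp (adjugate A *ᵥ v) := by
  ext i; fin_cases i <;>
    simp [perp, vecMul, mulVec, dotProduct, Fin.sum_univ_two, adjugate_fin_two] <;> ring

theorem mul_vecMulVec_perp_mul_adjugate {A : Matrix (Fin 2) (Fin 2) R} {v : Fin 2 → R} {a : R}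
    (hAv : A *ᵥ v = a • v) :
    A * vecMulVec v (perp v) * adjugate A = a ^ 2 • vecMulVec v (perp v) := by
  rw [mul_vecMulVec, vecMulVec_mul, perp_vecMul, adjugate_adjugate' A, Fintype.card_fin,
    Nat.sub_self, pow_zero, one_smul, hAv, perp_smul, vecMulVec_smul, smul_vecMulVec, smul_smul,
    sq]

variable {K : Type*} [Field K]

theorem eigenvalue_sq_sub_trace_mul_add_det {A : Matrix (Fin 2) (Fin 2) K} {v : Fin 2 → K}
    {a : K} (hv : v ≠ 0) (hAv : A *ᵥ v = a • v) : a ^ 2 - A.trace * a + A.det = 0 := by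
  have hCH : A ^ 2 - A.trace • A + A.det • (1 : Matrix (Fin 2) (Fin 2) K) = 0 := by
    simpa [charpoly_fin_two, Algebra.smul_def] using aeval_self_charpoly A
  have := congrArg (· *ᵥ v) hCH
  simp only [add_mulVec, sub_mulVec, smul_mulVec, sq, ← mulVec_mulVec, hAv, mulVec_smul,
    one_mulVec, zero_mulVec, smul_smul] at this
  rwa [← sub_smul, ← add_smul, smul_eq_zero_iff_left hv, ← sq] at this

theorem exists_eq_smul_vecMulVec_perp {N : Matrix (Fin 2) (Fin 2) K} {v : Fin 2 → K}
    (hv : v ≠ 0) (hNv : N *ᵥ v = 0) (hN : N.trace = 0) :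
    ∃ c : K, N = c • vecMulVec v (perp v) := by
  have h0 : N 0 0 * v 0 + N 0 1 * v 1 = 0 := by
    simpa [mulVec, dotProduct, Fin.sum_univ_two] using congrFun hNv 0
  have h1 : N 1 0 * v 0 + N 1 1 * v 1 = 0 := by
    simpa [mulVec, dotProduct, Fin.sum_univ_two] using congrFun hNv 1
  rw [trace_fin_two] at hN
  have hv' : v 0 ≠ 0 ∨ v 1 ≠ 0 := by
    by_contra! h
    exact hv (funext fun i => by fin_cases i <;> simp [h.1, h.2])
  rcases hv' with hx | hy
  · refine ⟨-N 0 1 / v 0 ^ 2, ?_⟩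
    ext i j
    fin_cases i <;> fin_cases j <;> simp [perp] <;> field_simp
    · linear_combination h0
    · linear_combination v 0 * h1 + v 1 * h0 - v 0 * v 1 * hN
    · linear_combination v 0 * hN - h0
  · refine ⟨N 1 0 / v 1 ^ 2, ?_⟩
    ext i j
    fin_cases i <;> fin_cases j <;> simp [perp] <;> field_simp
    · linear_combination v 1 * hN - h1
    · linear_combination v 0 * h1 + v 1 * h0 - v 0 * v 1 * hN
    · linear_combination h1

end Matrix

open Filter Topology

theorem Filter.Tendsto.eventually_eq_of_discreteTopology {X ι : Type*} [TopologicalSpace X]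
    {s : Set X} [DiscreteTopology s] {l : Filter ι} {f : ι → X} {x : X} (hf : ∀ i, f i ∈ s)
    (hx : x ∈ s) (h : Tendsto f l (𝓝 x)) : ∀ᶠ i in l, f i = x := by
  have h' : Tendsto (fun i => (⟨f i, hf i⟩ : s)) l (𝓝 ⟨x, hx⟩) := tendsto_subtype_rng.2 h
  rw [nhds_discrete, tendsto_pure] at h'
  exact h'.mono fun i hi => congrArg Subtype.val hi

namespace Matrix.SpecialLinearGroup

open scoped commutatorElement

section CommRing

variable {R : Type*} [CommRing R] {A C : SpecialLinearGroup (Fin 2) R} {v : Fin 2 → R} {a c : R}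

theorem eigenvalue_ne_zero (hv : v ≠ 0) (hAv : ↑A *ᵥ v = a • v) : a ≠ 0 := by
  rintro rfl
  apply hv
  rw [← one_mulVec v, ← coe_one, ← inv_mul_cancel A, coe_mul, ← mulVec_mulVec, hAv, zero_smul,
    mulVec_zero]

theorem pow_mulVec_of_mulVec_eq_smul (hAv : ↑A *ᵥ v = a • v) (n : ℕ) :
    ↑(A ^ n) *ᵥ v = a ^ n • v := by
  induction n with
  | zero => simp
  | succ n ih =>
    rw [pow_succ, coe_mul, ← mulVec_mulVec, hAv, mulVec_smul, ih, smul_smul, ← pow_succ']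

theorem coe_conj_of_coe_eq_one_add_smul (hAv : ↑A *ᵥ v = a • v)
    (hC : (C : Matrix (Fin 2) (Fin 2) R) = 1 + c • vecMulVec v (perp v)) :
    ↑(A * C * A⁻¹) = 1 + (a ^ 2 * c) • vecMulVec v (perp v) := by
  rw [coe_mul, coe_mul, coe_inv, hC, mul_add, add_mul, mul_one, mul_adjugate, det_coe, one_smul,
    mul_smul_comm, smul_mul_assoc, mul_vecMulVec_perp_mul_adjugate hAv, smul_smul, mul_comm]

end CommRing

section Field

variable {K : Type*} [Field K] {A B C : SpecialLinearGroup (Fin 2) K} {v : Fin 2 → K} {a b : K}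

theorem inv_mulVec_of_mulVec_eq_smul (hv : v ≠ 0) (hAv : ↑A *ᵥ v = a • v) :
    ↑A⁻¹ *ᵥ v = a⁻¹ • v := by
  rw [eq_inv_smul_iff₀ (eigenvalue_ne_zero hv hAv), ← mulVec_smul, ← hAv, mulVec_mulVec, ← coe_mul,
    inv_mul_cancel, coe_one, one_mulVec]

theorem commutatorElement_mulVec (hv : v ≠ 0) (hAv : ↑A *ᵥ v = a • v) (hBv : ↑B *ᵥ v = b • v) :
    ↑⁅A, B⁆ *ᵥ v = v := by
  have ha := eigenvalue_ne_zero hv hAv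
  have hb := eigenvalue_ne_zero hv hBv
  simp only [commutatorElement_def, coe_mul, ← mulVec_mulVec, inv_mulVec_of_mulVec_eq_smul hv hAv,
    inv_mulVec_of_mulVec_eq_smul hv hBv, mulVec_smul, hAv, hBv, smul_smul]
  rw [show b⁻¹ * (a⁻¹ * (b * a)) = 1 by field_simp, one_smul]

theorem exists_coe_eq_one_add_smul (hv : v ≠ 0) (hCv : ↑C *ᵥ v = v) :
    ∃ c : K, (C : Matrix (Fin 2) (Fin 2) K) = 1 + c • vecMulVec v (perp v) := by
  have htr : (C : Matrix (Fin 2) (Fin 2) K).trace = 2 := by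
    have := eigenvalue_sq_sub_trace_mul_add_det hv (a := 1) (by rw [hCv, one_smul])
    rw [det_coe] at this
    linear_combination -this
  obtain ⟨c, hc⟩ := exists_eq_smul_vecMulVec_perp (N := (C : Matrix (Fin 2) (Fin 2) K) - 1) hv
    (by rw [sub_mulVec, hCv, one_mulVec, sub_self])
    (by rw [trace_sub, htr, trace_one, Fintype.card_fin]; norm_num)
  exact ⟨c, by rw [← hc, add_sub_cancel]⟩

end Field

section Real

variable {A C : SpecialLinearGroup (Fin 2) ℝ} {v : Fin 2 → ℝ} {a c : ℝ}

theorem tendsto_conj_pow_nhds_one (hAv : ↑A *ᵥ v = a • v) (ha : |a| < 1)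
    (hC : (C : Matrix (Fin 2) (Fin 2) ℝ) = 1 + c • vecMulVec v (perp v)) :
    Tendsto (fun n : ℕ => A ^ n * C * (A ^ n)⁻¹) atTop (𝓝 1) := by
  have hcoe (n : ℕ) : ((A ^ n * C * (A ^ n)⁻¹ : SpecialLinearGroup (Fin 2) ℝ) : Matrix _ _ ℝ) =
      1 + ((a ^ 2) ^ n * c) • vecMulVec v (perp v) := by
    rw [coe_conj_of_coe_eq_one_add_smul (pow_mulVec_of_mulVec_eq_smul hAv n) hC, ← pow_mul,
      ← pow_mul']
  have hlim : Tendsto (fun n : ℕ => (a ^ 2) ^ n * c) atTop (𝓝 0) := by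
    simpa using (tendsto_pow_atTop_nhds_zero_of_abs_lt_one
      (by rw [abs_pow, sq_lt_one_iff_abs_lt_one, abs_abs]; exact ha)).mul_const c
  have hcont : Continuous fun s : ℝ =>
      (1 : Matrix (Fin 2) (Fin 2) ℝ) + s • vecMulVec v (perp v) := by
    fun_prop
  rw [nhds_induced, tendsto_comap_iff]
  simpa [Function.comp_def, hcoe] using (hcont.tendsto 0).comp hlim

theorem eq_one_of_mulVec_eq_self (Γ : Subgroup (SpecialLinearGroup (Fin 2) ℝ))
    [DiscreteTopology Γ] (hA : A ∈ Γ) (hC : C ∈ Γ) (hv : v ≠ 0) (hAv : ↑A *ᵥ v = a • v)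
    (ha : |a| ≠ 1) (hCv : ↑C *ᵥ v = v) : C = 1 := by
  obtain ⟨c, hc⟩ := exists_coe_eq_one_add_smul hv hCv
  wlog hlt : |a| < 1 generalizing A a
  · refine this (inv_mem hA) (inv_mulVec_of_mulVec_eq_smul hv hAv) ?_ ?_
    · rwa [abs_inv, ne_eq, inv_eq_one]
    · rw [abs_inv]
      exact inv_lt_one_of_one_lt₀ (lt_of_le_of_ne (not_lt.1 hlt) ha.symm)
  have hmem (n : ℕ) : A ^ n * C * (A ^ n)⁻¹ ∈ (Γ : Set (SpecialLinearGroup (Fin 2) ℝ)) :=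
    mul_mem (mul_mem (pow_mem hA n) hC) (inv_mem (pow_mem hA n))
  obtain ⟨n, hn⟩ :=
    ((tendsto_conj_pow_nhds_one hAv hlt hc).eventually_eq_of_discreteTopology hmem
      (one_mem Γ)).exists
  exact conj_eq_one_iff.1 hn

theorem abs_eigenvalue_ne_one (hA : 2 < |(A : Matrix (Fin 2) (Fin 2) ℝ).trace|) (hv : v ≠ 0)
    (hAv : ↑A *ᵥ v = a • v) : |a| ≠ 1 := by
  have h := eigenvalue_sq_sub_trace_mul_add_det hv hAv
  rw [det_coe] at h
  intro ha
  rcases abs_eq zero_le_one |>.1 ha with rfl | rfl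
  · rw [show (A : Matrix (Fin 2) (Fin 2) ℝ).trace = 2 by linear_combination -h] at hA
    norm_num at hA
  · rw [show (A : Matrix (Fin 2) (Fin 2) ℝ).trace = -2 by linear_combination h] at hA
    norm_num at hA

end Real

end Matrix.SpecialLinearGroup

open Matrix Matrix.SpecialLinearGroup

theorem stmt_0_general (Γ : Subgroup (Matrix.SpecialLinearGroup (Fin 2) ℝ))
    (hΓ : DiscreteTopology Γ)
    (A B : Matrix.SpecialLinearGroup (Fin 2) ℝ) (hA : A ∈ Γ) (hB : B ∈ Γ)
    (hAhyp : |Matrix.trace (A : Matrix (Fin 2) (Fin 2) ℝ)| > 2)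
    (v : Fin 2 → ℝ) (hv : v ≠ 0)
    (hvA : ∃ a : ℝ, (A : Matrix (Fin 2) (Fin 2) ℝ).mulVec v = a • v)
    (hvB : ∃ b : ℝ, (B : Matrix (Fin 2) (Fin 2) ℝ).mulVec v = b • v) :
    A * B = B * A := by
  obtain ⟨a, hAv⟩ := hvA
  obtain ⟨b, hBv⟩ := hvB
  rw [← commutatorElement_eq_one_iff_mul_comm]
  exact eq_one_of_mulVec_eq_self Γ hA
    (mul_mem (mul_mem (mul_mem hA hB) (inv_mem hA)) (inv_mem hB)) hv hAv
    (abs_eigenvalue_ne_one hAhyp hv hAv) (commutatorElement_mulVec hv hAv hBv)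

/-- Two hyperbolic elements of a discrete subgroup of SL(2,ℝ) sharing a common
eigenvector (i.e. a common fixed point on the circle at infinity) commute. -/
theorem stmt_0 (Γ : Subgroup (Matrix.SpecialLinearGroup (Fin 2) ℝ))
    (hΓ : DiscreteTopology Γ)
    (A B : Matrix.SpecialLinearGroup (Fin 2) ℝ) (hA : A ∈ Γ) (hB : B ∈ Γ)
    (hAhyp : |Matrix.trace (A : Matrix (Fin 2) (Fin 2) ℝ)| > 2)
    (hBhyp : |Matrix.trace (B : Matrix (Fin 2) (Fin 2) ℝ)| > 2)
    (v : Fin 2 → ℝ) (hv : v ≠ 0)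
    (hvA : ∃ a : ℝ, (A : Matrix (Fin 2) (Fin 2) ℝ).mulVec v = a • v)
    (hvB : ∃ b : ℝ, (B : Matrix (Fin 2) (Fin 2) ℝ).mulVec v = b • v) :
    A * B = B * A :=
  stmt_0_general Γ hΓ A B hA hB hAhyp v hv hvA hvB
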